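/- Let Γ_t be the p×p companion matrix of the equation y_t = Σ_{i=1}^p φ_i(t) y_{t−i} (first row (φ_1(t),...,φ_p(t)), subdiagonal of ones, zeros elsewhere), and let F_{t,s} = Γ_t Γ_{t−1} ··· Γ_{s+1} be the product of companion matrices. Then the (i,j)-entry of F_{t,s} equals ξ^{(j)}_{t−i+1,s}; in particular the top-left entry of F_{t,s} (the Green's function H(t,s)) equals the principal determinant ξ_{t,s} = det(Φ^{(1)}_{t,s}). -/

import Mathlib

/-- The `k × k` banded lower Hessenberg matrix `Φ^{(m)}_{t,s}` (here `k = t - s`),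
0-indexed: superdiagonal entries are `-1`; first-column entries (row `i`, 0-indexed) are
`φ_{i+m}(s+i+1)` when `i + m ≤ p` and `0` otherwise; for columns `j ≥ 1` (0-indexed) the
`(i,j)` entry is `φ_{i-j+1}(s+i+1)` when `j ≤ i` and `i - j + 1 ≤ p`, and `0` otherwise. -/
def Phi (p : ℕ) (φ : ℕ → ℤ → ℂ) (m : ℕ) (s : ℤ) (k : ℕ) :
    Matrix (Fin k) (Fin k) ℂ :=
  Matrix.of fun i j =>
    if (j : ℕ) = (i : ℕ) + 1 then -1
    else if (j : ℕ) = 0 then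
      (if (i : ℕ) + m ≤ p then φ ((i : ℕ) + m) (s + (i : ℕ) + 1) else 0)
    else if (j : ℕ) ≤ (i : ℕ) then
      (if (i : ℕ) - (j : ℕ) + 1 ≤ p then φ ((i : ℕ) - (j : ℕ) + 1) (s + (i : ℕ) + 1)
        else 0)
    else 0

/-- The fundamental solution `ξ^{(m)}_{t,s}`: the banded Hessenbergian
`det(Φ^{(m)}_{t,s})` for `t > s`; `1` for `t = s - m + 1`; `0` for other
`t ∈ [s - p + 1, s]`. -/
def xi (p : ℕ) (φ : ℕ → ℤ → ℂ) (m : ℕ) (s t : ℤ) : ℂ :=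
  if s < t then (Phi p φ m s (t - s).toNat).det
  else if t = s - (m : ℤ) + 1 then 1 else 0

/-- The companion matrix `Γ_u` (0-indexed): first row `(φ_1(u), ..., φ_p(u))`,
subdiagonal of ones, zeros elsewhere. -/
def Gamma (p : ℕ) (φ : ℕ → ℤ → ℂ) (u : ℤ) : Matrix (Fin p) (Fin p) ℂ :=
  Matrix.of fun i j =>
    if (i : ℕ) = 0 then φ ((j : ℕ) + 1) u
    else if (i : ℕ) = (j : ℕ) + 1 then 1 else 0

/-- `F_{s+k,s} = Γ_{s+k} Γ_{s+k-1} ⋯ Γ_{s+1}` (product in decreasing order of the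
argument from the left), as a function of `k = t - s`. -/
noncomputable def Fmat (p : ℕ) (φ : ℕ → ℤ → ℂ) (s : ℤ) : ℕ → Matrix (Fin p) (Fin p) ℂ
  | 0 => 1
  | k + 1 => Gamma p φ (s + (k : ℤ) + 1) * Fmat p φ s k

/-!
Writing `F_{t,s} = F_{t,s+1} Γ_{s+1}`, column `j` of `F_{t,s}` is `φ_{j+1}(s+1)` times column `0`
of `F_{t,s+1}` plus its column `j+1` (absent for `j+1 = p`). Laplace expansion of
`det Φ^{(m)}_{t,s}` along its first row gives the same recurrence
`ξ^{(m)}_{t,s} = φ_m(s+1) ξ^{(1)}_{t,s+1} + ξ^{(m+1)}_{t,s+1}`, and the initial values make it hold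
for every `t`. For `j + 1 = p` the extra term is `ξ^{(p+1)}_{t,s+1}`, which vanishes for
`t > s - p + 1` because `Φ^{(p+1)}` has a zero first column. Both sides agree at `t = s`, so
induction on `t - s` identifies them.
-/

section

variable {p : ℕ} {φ : ℕ → ℤ → ℂ}

lemma Phi_apply_zero_zero (m : ℕ) (s : ℤ) (k : ℕ) :
    Phi p φ m s (k + 1) 0 0 = if m ≤ p then φ m (s + 1) else 0 := by
  simp [Phi]

lemma Phi_apply_zero_one (m : ℕ) (s : ℤ) (k : ℕ) : Phi p φ m s (k + 2) 0 1 = -1 := by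
  simp [Phi]

lemma Phi_apply_zero_succ_succ (m : ℕ) (s : ℤ) (k : ℕ) (j : Fin k) :
    Phi p φ m s (k + 2) 0 j.succ.succ = 0 := by
  simp [Phi]

lemma Phi_apply_succ_zero (m : ℕ) (s : ℤ) (k : ℕ) (i : Fin (k + 1)) :
    Phi p φ m s (k + 2) i.succ 0 = Phi p φ (m + 1) (s + 1) (k + 1) i 0 := by
  simp only [Phi, Matrix.of_apply, Fin.val_succ, Fin.val_zero]
  simp only [show (i : ℕ) + 1 + m = i + (m + 1) by omega, Nat.cast_succ, ← add_assoc,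
    add_right_comm s 1]
  simp

lemma Phi_apply_succ_succ (m : ℕ) (s : ℤ) (k : ℕ) (i j : Fin k) :
    Phi p φ m s (k + 1) i.succ j.succ = Phi p φ 1 (s + 1) k i j := by
  simp only [Phi, Matrix.of_apply, Fin.val_succ]
  simp only [Nat.cast_succ, ← add_assoc, add_right_comm s 1]
  by_cases hj : (j : ℕ) = 0
  · simp [hj]
  · simp [hj, Nat.add_sub_add_right]

lemma Phi_apply_succ_right (m m' : ℕ) (s : ℤ) (k : ℕ) (i : Fin (k + 1)) (j : Fin k) :
    Phi p φ m s (k + 1) i j.succ = Phi p φ m' s (k + 1) i j.succ := by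
  simp [Phi]

lemma det_Phi_succ_succ (m : ℕ) (s : ℤ) (n : ℕ) :
    (Phi p φ m s (n + 2)).det =
      (if m ≤ p then φ m (s + 1) else 0) * (Phi p φ 1 (s + 1) (n + 1)).det
        + (Phi p φ (m + 1) (s + 1) (n + 1)).det := by
  have minor_zero : (Phi p φ m s (n + 2)).submatrix Fin.succ Fin.succ
      = Phi p φ 1 (s + 1) (n + 1) := by
    ext i j
    exact Phi_apply_succ_succ m s (n + 1) i j
  have minor_one : (Phi p φ m s (n + 2)).submatrix Fin.succ (Fin.succAbove 1)
      = Phi p φ (m + 1) (s + 1) (n + 1) := by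
    ext i j
    cases j using Fin.cases with
    | zero => simp [Phi_apply_succ_zero]
    | succ j =>
      rw [Matrix.submatrix_apply, ← Fin.succ_zero_eq_one, Fin.succ_succAbove_succ,
        Fin.succAbove_zero, Phi_apply_succ_succ, Phi_apply_succ_right 1 (m + 1)]
  rw [Matrix.det_succ_row_zero, Fin.sum_univ_succ, Fin.sum_univ_succ]
  simp [Phi_apply_zero_zero, Phi_apply_zero_one, Phi_apply_zero_succ_succ, minor_one,
    minor_zero]

lemma det_Phi_eq_zero_of_lt {m : ℕ} (hm : p < m) (s : ℤ) (n : ℕ) :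
    (Phi p φ m s (n + 1)).det = 0 :=
  Matrix.det_eq_zero_of_column_eq_zero 0 fun i => by
    simp [Phi, show ¬(i : ℕ) + m ≤ p by omega]

lemma xi_add_natCast_succ (m : ℕ) (s : ℤ) (k : ℕ) :
    xi p φ m s (s + (k + 1 : ℕ)) = (Phi p φ m s (k + 1)).det := by
  rw [xi, if_pos (by omega), add_sub_cancel_left, Int.toNat_natCast]

lemma xi_of_le {s t : ℤ} (m : ℕ) (h : t ≤ s) :
    xi p φ m s t = if t = s - m + 1 then 1 else 0 := by
  simp [xi, not_lt.2 h]

lemma xi_eq_zero_of_lt {m : ℕ} (hm : p < m) {s t : ℤ} (ht : s - m + 1 < t) :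
    xi p φ m s t = 0 := by
  rcases lt_or_ge s t with hst | hts
  · obtain ⟨k, rfl⟩ : ∃ k : ℕ, t = s + (k + 1 : ℕ) := ⟨(t - s - 1).toNat, by omega⟩
    rw [xi_add_natCast_succ, det_Phi_eq_zero_of_lt hm]
  · rw [xi_of_le m hts, if_neg ht.ne']

lemma xi_eq_mul_xi_one_add_xi_succ {m : ℕ} (hm : 1 ≤ m) (s t : ℤ) :
    xi p φ m s t = (if m ≤ p then φ m (s + 1) else 0) * xi p φ 1 (s + 1) t
      + xi p φ (m + 1) (s + 1) t := by
  rcases lt_or_ge s t with hst | hts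
  · obtain ⟨k, rfl⟩ : ∃ k : ℕ, t = s + (k + 1 : ℕ) := ⟨(t - s - 1).toNat, by omega⟩
    have hshift : s + (k + 1 : ℕ) = s + 1 + k := by push_cast; ring
    cases k with
    | zero =>
      rw [xi_add_natCast_succ, Matrix.det_fin_one, Phi_apply_zero_zero, hshift,
        Nat.cast_zero, add_zero, xi_of_le _ le_rfl, xi_of_le _ le_rfl,
        if_pos (show s + 1 = s + 1 - (1 : ℕ) + 1 by push_cast; ring),
        if_neg (show s + 1 ≠ s + 1 - (m + 1 : ℕ) + 1 by push_cast; omega), mul_one, add_zero]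
    | succ n =>
      rw [xi_add_natCast_succ, det_Phi_succ_succ, hshift, xi_add_natCast_succ,
        xi_add_natCast_succ]
  · rw [xi_of_le m hts, xi_of_le 1 (by omega), xi_of_le (m + 1) (by omega),
      if_neg (show t ≠ s + 1 - (1 : ℕ) + 1 by push_cast; omega), mul_zero, zero_add]
    exact if_congr (by push_cast; omega) rfl rfl

lemma Fmat_succ (s : ℤ) (k : ℕ) :
    Fmat p φ s (k + 1) = Fmat p φ (s + 1) k * Gamma p φ (s + 1) := by
  induction k generalizing s with
  | zero => simp [Fmat]
  | succ k ih =>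
    rw [Fmat, ih, Fmat, ← mul_assoc]
    congr 3
    push_cast; ring

lemma mul_Gamma_apply {ι : Type*} (A : Matrix ι (Fin p) ℂ) (u : ℤ) (i : ι) (j : Fin p) :
    (A * Gamma p φ u) i j = A i ⟨0, j.pos⟩ * φ (j + 1) u
      + if h : (j : ℕ) + 1 < p then A i ⟨j + 1, h⟩ else 0 := by
  obtain ⟨q, rfl⟩ : ∃ q, p = q + 1 := ⟨p - 1, by have := j.pos; omega⟩
  rw [Matrix.mul_apply, Fin.sum_univ_succ]
  simp only [Gamma, Matrix.of_apply, Fin.val_zero, Fin.val_succ, Nat.add_right_cancel_iff,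
    mul_ite, mul_one, mul_zero, Nat.succ_ne_zero, if_false, if_true, Fin.zero_eta]
  congr 1
  split_ifs with h
  · rw [Finset.sum_eq_single ⟨j, by omega⟩]
    · simp
    · exact fun l _ hl => if_neg (by simpa [Fin.ext_iff] using hl)
    · simp
  · exact Finset.sum_eq_zero fun l _ => if_neg (by omega)

lemma Fmat_apply (s : ℤ) (k : ℕ) (i j : Fin p) :
    Fmat p φ s k i j = xi p φ (j + 1) s (s + k - i) := by
  induction k generalizing s j with
  | zero =>
    rw [Fmat, Matrix.one_apply, xi_of_le _ (by omega)]
    exact if_congr (by omega) rfl rfl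
  | succ k ih =>
    have hshift : s + 1 + k - i = s + (k + 1 : ℕ) - i := by push_cast; ring
    rw [Fmat_succ, mul_Gamma_apply, ih, xi_eq_mul_xi_one_add_xi_succ (by omega) s,
      if_pos (show (j : ℕ) + 1 ≤ p from j.isLt), ← hshift, Fin.val_mk, zero_add,
      mul_comm (xi _ _ _ _ _)]
    split_ifs with h
    · rw [ih]
    · have hi := i.isLt
      rw [xi_eq_zero_of_lt (m := j + 1 + 1) (by omega) (by omega), add_zero]

end

theorem stmt17 (p : ℕ) (hp : 1 ≤ p) (φ : ℕ → ℤ → ℂ) (s t : ℤ) (ht : s < t) :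
    (∀ i j : Fin p,
      Fmat p φ s (t - s).toNat i j = xi p φ ((j : ℕ) + 1) s (t - (i : ℕ))) ∧
    Fmat p φ s (t - s).toNat ⟨0, hp⟩ ⟨0, hp⟩ = xi p φ 1 s t := by
  have hk : ((t - s).toNat : ℤ) = t - s := Int.toNat_of_nonneg (by omega)
  have entries : ∀ i j : Fin p,
      Fmat p φ s (t - s).toNat i j = xi p φ ((j : ℕ) + 1) s (t - (i : ℕ)) := fun i j => by
    rw [Fmat_apply, hk, add_sub_cancel]
  exact ⟨entries, by simpa using entries ⟨0, hp⟩ ⟨0, hp⟩⟩
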